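/- arXiv:2510.03850 — 4 statements merged into one kernel-verified Lean document; each statement's English description precedes it below -/
import Mathlib

section
/- Let μ, r̂ > 0 and 0 < α < 1, and let f be the α-μ density with parameters α, μ, r̂. Then for every real s > 0, the Laplace transform of f satisfies ∫_0^∞ exp(−s·x)·f(x) dx = (α·μ^μ/(Γ(μ)·(r̂·s)^{αμ})) · ∑_{i=0}^∞ Γ(α(i+μ)) · (−μ·(r̂·s)^{−α})^i / i!, the series on the right-hand side converging absolutely. -/
/-! Expand `exp (-μ (x / r̂) ^ α)` in its power series and integrate term by term against
`exp (-s x)`: every term is a Gamma integral, `∫ x ^ (α (i + μ) - 1) exp (-s x) = Γ(α (i + μ)) /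
s ^ (α (i + μ))`. The exchange of sum and integral is justified by the absolute summability of
the resulting series, which is a ratio test: log-convexity of `Γ` gives
`Γ(x + α) ≤ Γ(x) x ^ α`, so consecutive terms have ratio `O(n ^ (α - 1))`, which tends to `0`
because `α < 1`. -/

open MeasureTheory Real

/-- The α-μ probability density with parameters `α`, `μ`, `rh` (= r̂). -/
noncomputable def alphaMuPDF (α μ rh : ℝ) (x : ℝ) : ℝ :=
  if 0 < x then
    α * μ ^ μ * x ^ (α * μ - 1) * Real.exp (-(μ * (x / rh) ^ α)) /
      (Real.Gamma μ * rh ^ (α * μ))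
  else 0

open Filter Topology

namespace Real

theorem Gamma_add_le_Gamma_mul_rpow {x a : ℝ} (hx : 0 < x) (ha₀ : 0 ≤ a) (ha₁ : a ≤ 1) :
    Gamma (x + a) ≤ Gamma x * x ^ a := by
  have hconv := convexOn_log_Gamma.2 (Set.mem_Ioi.2 hx) (Set.mem_Ioi.2 (by linarith : 0 < x + 1))
    (sub_nonneg.2 ha₁) ha₀ (sub_add_cancel 1 a)
  simp only [smul_eq_mul, Function.comp_apply, Gamma_add_one hx.ne'] at hconv
  rw [show (1 - a) * x + a * (x + 1) = x + a by ring,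
    log_mul hx.ne' (Gamma_pos_of_pos hx).ne'] at hconv
  rw [← log_le_log_iff (Gamma_pos_of_pos (by linarith)) (by positivity),
    log_mul (Gamma_pos_of_pos hx).ne' (by positivity), log_rpow hx]
  linarith

end Real

theorem tendsto_mul_add_rpow_div_natCast_add_one {α μ : ℝ} (hμ : 0 < μ) (hα0 : 0 < α)
    (hα1 : α < 1) :
    Tendsto (fun n : ℕ => (α * (n + μ)) ^ α / (n + 1)) atTop (𝓝 0) := by
  have hbound (n : ℕ) : (α * (n + μ)) ^ α / (n + 1) ≤ (1 + μ) ^ α * ((n : ℝ) + 1) ^ (α - 1) := by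
    have hn : (0 : ℝ) < n + 1 := by positivity
    calc (α * (n + μ)) ^ α / (n + 1) ≤ ((1 + μ) * (n + 1)) ^ α / (n + 1) := by
          gcongr ?_ ^ α / _
          nlinarith [(n.cast_nonneg : (0 : ℝ) ≤ n), mul_nonneg hμ.le (n.cast_nonneg : (0 : ℝ) ≤ n)]
      _ = (1 + μ) ^ α * ((n : ℝ) + 1) ^ (α - 1) := by
          rw [mul_rpow (by positivity) hn.le, rpow_sub_one hn.ne', mul_div_assoc]
  have hpow : Tendsto (fun n : ℕ => ((n : ℝ) + 1) ^ (α - 1)) atTop (𝓝 0) := by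
    simpa only [neg_sub, Function.comp_def] using (tendsto_rpow_neg_atTop (sub_pos.2 hα1)).comp
      (tendsto_atTop_add_const_right _ 1 tendsto_natCast_atTop_atTop)
  refine squeeze_zero (fun n => by positivity) hbound ?_
  simpa using hpow.const_mul ((1 + μ) ^ α)

theorem summable_abs_Gamma_mul_pow_div_factorial {α μ : ℝ} (hμ : 0 < μ) (hα0 : 0 < α)
    (hα1 : α < 1) (t : ℝ) :
    Summable fun i : ℕ => |Gamma (α * (i + μ)) * t ^ i / i.factorial| := by
  have hratio (n : ℕ) :
      |Gamma (α * ((n + 1 : ℕ) + μ)) * t ^ (n + 1) / (n + 1).factorial| ≤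
        (|t| * (α * (n + μ)) ^ α / (n + 1)) * |Gamma (α * (n + μ)) * t ^ n / n.factorial| := by
    have hx : 0 < α * (n + μ) := by positivity
    have hΓ := Gamma_pos_of_pos hx
    rw [show α * ((n + 1 : ℕ) + μ) = α * (n + μ) + α by push_cast; ring, Nat.factorial_succ,
      abs_div, abs_div, abs_mul, abs_mul, abs_of_pos hΓ,
      abs_of_pos (Gamma_pos_of_pos (by positivity)), abs_pow, abs_pow, Nat.abs_cast, Nat.abs_cast]
    calc Gamma (α * (n + μ) + α) * |t| ^ (n + 1) / ((n + 1) * n.factorial : ℕ)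
        ≤ Gamma (α * (n + μ)) * (α * (n + μ)) ^ α * |t| ^ (n + 1) /
            ((n + 1) * n.factorial : ℕ) := by
          gcongr
          exact Gamma_add_le_Gamma_mul_rpow hx hα0.le hα1.le
      _ = _ := by
          push_cast
          field_simp
          ring
  have hsmall := (tendsto_mul_add_rpow_div_natCast_add_one hμ hα0 hα1).const_mul |t|
  rw [mul_zero] at hsmall
  refine summable_of_ratio_norm_eventually_le (r := 1 / 2) (by norm_num) ?_
  filter_upwards [hsmall.eventually_le_const (by norm_num : (0 : ℝ) < 1 / 2)] with n hn
  simp only [norm_eq_abs, abs_abs]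
  exact (hratio n).trans (by rw [← mul_div_assoc] at hn; gcongr)

theorem hasSum_rpow_mul_exp_neg_mul_rpow {x : ℝ} (hx : 0 < x) (α μ c : ℝ) :
    HasSum (fun i : ℕ => (-c) ^ i / i.factorial * x ^ (α * (i + μ) - 1))
      (x ^ (α * μ - 1) * exp (-(c * x ^ α))) := by
  have hexp := (NormedSpace.expSeries_div_hasSum_exp (-(c * x ^ α))).mul_left (x ^ (α * μ - 1))
  rw [← exp_eq_exp_ℝ] at hexp
  refine hexp.congr_fun fun i => ?_
  rw [show α * (i + μ) - 1 = (α * μ - 1) + α * i by ring, rpow_add hx, rpow_mul_natCast hx.le,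
    ← neg_mul, mul_pow]
  ring

theorem integral_pow_div_factorial_mul_rpow_mul_exp_neg_mul_Ioi {α μ s : ℝ} (hμ : 0 < μ)
    (hα0 : 0 < α) (hs : 0 < s) (c : ℝ) (i : ℕ) :
    ∫ x in Set.Ioi 0, (-c) ^ i / i.factorial * (x ^ (α * (i + μ) - 1) * exp (-(s * x))) =
      s ^ (-(α * μ)) * (Gamma (α * (i + μ)) * (-c * s ^ (-α)) ^ i / i.factorial) := by
  rw [integral_const_mul, integral_rpow_mul_exp_neg_mul_Ioi (by positivity) hs,
    show α * (i + μ) = α * μ + α * i by ring, one_div, inv_rpow hs.le, ← rpow_neg hs.le,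
    neg_add, rpow_add hs, mul_pow, show -(α * i) = -α * i by ring, rpow_mul_natCast hs.le]
  ring

theorem integral_exp_neg_mul_mul_rpow_mul_exp_neg_mul_rpow_Ioi {α μ s : ℝ} (hμ : 0 < μ)
    (hα0 : 0 < α) (hα1 : α < 1) (hs : 0 < s) (c : ℝ) :
    ∫ x in Set.Ioi 0, exp (-(s * x)) * (x ^ (α * μ - 1) * exp (-(c * x ^ α))) =
      s ^ (-(α * μ)) * ∑' i : ℕ, Gamma (α * (i + μ)) * (-c * s ^ (-α)) ^ i / i.factorial := by
  set F : ℕ → ℝ → ℝ := fun i x =>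
    (-c) ^ i / i.factorial * (x ^ (α * (i + μ) - 1) * exp (-(s * x)))
  have hF_int (i : ℕ) : IntegrableOn (F i) (Set.Ioi 0) := by
    have h := integrableOn_rpow_mul_exp_neg_mul_rpow (p := 1) (s := α * (i + μ) - 1)
      (by linarith [show 0 < α * (i + μ) by positivity]) one_pos hs
    simp only [rpow_one, neg_mul] at h
    exact h.const_mul _
  have hF_norm (i : ℕ) : ∫ x in Set.Ioi 0, ‖F i x‖ = |∫ x in Set.Ioi 0, F i x| := by
    have hbase : ∀ x ∈ Set.Ioi (0 : ℝ), 0 ≤ x ^ (α * (i + μ) - 1) * exp (-(s * x)) :=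
      fun x hx => by have : 0 < x := hx; positivity
    rw [setIntegral_congr_fun measurableSet_Ioi fun x hx => by
        rw [norm_mul, norm_eq_abs (_ * _), abs_of_nonneg (hbase x hx)],
      integral_const_mul, integral_const_mul, abs_mul, norm_eq_abs,
      abs_of_nonneg (setIntegral_nonneg measurableSet_Ioi hbase)]
  have hF_sum := hasSum_integral_of_summable_integral_norm hF_int (by
    simpa only [hF_norm, F, integral_pow_div_factorial_mul_rpow_mul_exp_neg_mul_Ioi hμ hα0 hs,
      abs_mul, abs_of_pos (rpow_pos_of_pos hs _)] using
      (summable_abs_Gamma_mul_pow_div_factorial hμ hα0 hα1 (-c * s ^ (-α))).mul_left _)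
  have hpt : ∀ x ∈ Set.Ioi (0 : ℝ),
      exp (-(s * x)) * (x ^ (α * μ - 1) * exp (-(c * x ^ α))) = ∑' i, F i x := fun x hx => by
    rw [mul_comm]
    exact (((hasSum_rpow_mul_exp_neg_mul_rpow hx α μ c).mul_right _).congr_fun
      fun i => (mul_assoc _ _ _).symm).tsum_eq.symm
  rw [setIntegral_congr_fun measurableSet_Ioi hpt, ← hF_sum.tsum_eq, ← tsum_mul_left]
  exact tsum_congr (integral_pow_div_factorial_mul_rpow_mul_exp_neg_mul_Ioi hμ hα0 hs c)

theorem alphaMuPDF_of_pos {α μ rh x : ℝ} (hrh : 0 ≤ rh) (hx : 0 < x) :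
    alphaMuPDF α μ rh x = α * μ ^ μ / (Gamma μ * rh ^ (α * μ)) *
      (x ^ (α * μ - 1) * exp (-(μ * rh ^ (-α) * x ^ α))) := by
  rw [alphaMuPDF, if_pos hx, div_rpow hx.le hrh, rpow_neg hrh, div_eq_inv_mul (x ^ α), ← mul_assoc]
  ring

/-- Series expansion of the Laplace transform of the α-μ density, for `0 < α < 1`. -/
theorem laplace_alphaMuPDF
    (α μ rh : ℝ) (hμ : 0 < μ) (hrh : 0 < rh) (hα0 : 0 < α) (hα1 : α < 1)
    (s : ℝ) (hs : 0 < s) :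
    Summable (fun i : ℕ =>
      |Real.Gamma (α * ((i : ℝ) + μ)) * (-μ * (rh * s) ^ (-α)) ^ i / (Nat.factorial i : ℝ)|) ∧
    ∫ x in Set.Ioi (0 : ℝ), Real.exp (-(s * x)) * alphaMuPDF α μ rh x =
      (α * μ ^ μ / (Real.Gamma μ * (rh * s) ^ (α * μ))) *
        ∑' i : ℕ,
          Real.Gamma (α * ((i : ℝ) + μ)) * (-μ * (rh * s) ^ (-α)) ^ i / (Nat.factorial i : ℝ) := by
  refine ⟨summable_abs_Gamma_mul_pow_div_factorial hμ hα0 hα1 _, ?_⟩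
  have hconst : α * μ ^ μ / (Gamma μ * rh ^ (α * μ)) * s ^ (-(α * μ)) =
      α * μ ^ μ / (Gamma μ * (rh * s) ^ (α * μ)) := by
    rw [mul_rpow hrh.le hs.le, rpow_neg hs.le]
    field_simp
  have hratio : -(μ * rh ^ (-α)) * s ^ (-α) = -μ * (rh * s) ^ (-α) := by
    rw [mul_rpow hrh.le hs.le]
    ring
  rw [setIntegral_congr_fun measurableSet_Ioi fun x hx => by
      rw [alphaMuPDF_of_pos hrh.le hx, mul_left_comm],
    integral_const_mul, integral_exp_neg_mul_mul_rpow_mul_exp_neg_mul_rpow_Ioi hμ hα0 hα1 hs,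
    ← mul_assoc, hconst, hratio]
end

section
/- Let α, μ, r̂ > 0 and let L ≥ 1 be an integer. Then for every r > 0 the series ∑_{i=0}^∞ δ_i · r^{αi + αμL − 1} / Γ(αi + αμL) converges absolutely, i.e., ∑_{i=0}^∞ |δ_i| · r^{αi + αμL − 1} / Γ(αi + αμL) < ∞. -/
open Real

noncomputable def deltaCoef (α μ rh : ℝ) (L : ℕ) : ℕ → ℝ
  | 0 => Real.Gamma (α * μ) ^ L
  | (i + 1) =>
      (1 / (((i : ℝ) + 1) * Real.Gamma (α * μ))) *
        ∑ l ∈ Finset.range (i + 1),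
          deltaCoef α μ rh L (i - l) *
            ((((l : ℝ) + 1) * (L : ℝ) + ((l : ℝ) + 1) - ((i : ℝ) + 1)) *
              Real.Gamma (α * (((l : ℝ) + 1) + μ)) *
              (-μ * rh ^ (-α)) ^ (l + 1) / (Nat.factorial (l + 1) : ℝ))
  termination_by i => i
  decreasing_by omega

/-!
The recurrence defining `δ` is J. C. P. Miller's recurrence for the coefficients of the `L`-th
power of the power series `g(t) = ∑ₖ Γ(α(k + μ)) qᵏ tᵏ / k!` with `q = -μ r̂^(-α)`; it comes from
comparing coefficients in `g · (g^L)' = L · g' · g^L`, so `δᵢ` is the `i`-th coefficient of `g^L`.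
The coefficients of `g` are bounded by `Γ(αk + αμ) |q|ᵏ / k!`. Since the Beta function
`Γ(x)Γ(y)/Γ(x+y)` is decreasing in both arguments (log-convexity of `Γ`), a Cauchy product of two
bounds of this shape is again of this shape, whence `|δᵢ| ≤ A · Γ(αi + αμL) (L|q|)ⁱ / i!`. The
`i`-th term of the series is then at most `A r^(αμL-1) (L|q|r^α)ⁱ / i!`, a multiple of the
exponential series.
-/

open Finset PowerSeries
open scoped Nat

namespace PowerSeries

variable {R : Type*} [CommRing R]

theorem miller_recurrence (g : R⟦X⟧) (L n : ℕ) :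
    ((n : R) + 1) * constantCoeff g * coeff (n + 1) (g ^ L) =
      ∑ l ∈ range (n + 1), coeff (n - l) (g ^ L) *
        ((((l : R) + 1) * L + ((l : R) + 1) - ((n : R) + 1)) * coeff (l + 1) g) := by
  have hD : g * d⁄dX R (g ^ L) = L • (d⁄dX R g * g ^ L) := by
    rcases L with _ | L
    · simp
    · rw [Derivation.leibniz_pow, Nat.add_sub_cancel, smul_eq_mul, nsmul_eq_mul, nsmul_eq_mul,
        pow_succ']
      ring
  have hlhs : coeff n (g * d⁄dX R (g ^ L)) =
      ((n : R) + 1) * constantCoeff g * coeff (n + 1) (g ^ L) +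
        ∑ l ∈ range (n + 1), coeff (n - l) (g ^ L) * (((n : R) - l) * coeff (l + 1) g) := by
    rw [coeff_mul, Nat.sum_antidiagonal_eq_sum_range_succ
      (fun i j => coeff i g * coeff j (d⁄dX R (g ^ L))), sum_range_succ', sum_range_succ]
    simp only [coeff_derivative, Nat.sub_zero, coeff_zero_eq_constantCoeff, sub_self, zero_mul,
      mul_zero, add_zero]
    rw [add_comm]
    congr 1
    · ring
    · refine sum_congr rfl fun l hl => ?_
      have hl : l + 1 ≤ n := mem_range.mp hl
      rw [show n - (l + 1) + 1 = n - l by omega, Nat.cast_sub hl]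
      push_cast
      ring
  have hrhs : coeff n (d⁄dX R g * g ^ L) =
      ∑ l ∈ range (n + 1), coeff (n - l) (g ^ L) * (((l : R) + 1) * coeff (l + 1) g) := by
    rw [coeff_mul, Nat.sum_antidiagonal_eq_sum_range_succ
      (fun i j => coeff i (d⁄dX R g) * coeff j (g ^ L))]
    refine sum_congr rfl fun l _ => ?_
    rw [coeff_derivative]
    ring
  have h := congrArg (coeff n) hD
  rw [map_nsmul, hlhs, hrhs, nsmul_eq_mul, mul_sum, ← eq_sub_iff_add_eq, ← sum_sub_distrib] at h
  rw [h]
  refine sum_congr rfl fun l _ => ?_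
  ring

theorem eq_coeff_pow_of_miller_recurrence {K : Type*} [Field K] [CharZero K] {g : K⟦X⟧}
    (hg : constantCoeff g ≠ 0) {L : ℕ} {c : ℕ → K} (h0 : c 0 = constantCoeff g ^ L)
    (hsucc : ∀ n, c (n + 1) = 1 / (((n : K) + 1) * constantCoeff g) *
      ∑ l ∈ range (n + 1), c (n - l) *
        ((((l : K) + 1) * L + ((l : K) + 1) - ((n : K) + 1)) * coeff (l + 1) g)) (n : ℕ) :
    c n = coeff n (g ^ L) := by
  induction n using Nat.strong_induction_on with
  | _ n ih =>
    rcases n with _ | n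
    · rw [h0, coeff_zero_eq_constantCoeff, map_pow]
    · rw [hsucc, sum_congr rfl fun l hl => by rw [ih (n - l) (by omega)],
        ← miller_recurrence]
      field_simp

end PowerSeries

theorem ConvexOn.map_add_sub_map_le {𝕜 : Type*} [Field 𝕜] [LinearOrder 𝕜]
    [IsStrictOrderedRing 𝕜] {s : Set 𝕜} {f : 𝕜 → 𝕜} (hf : ConvexOn 𝕜 s f) {a b h : 𝕜}
    (ha : a ∈ s) (hbh : b + h ∈ s) (hab : a ≤ b) (hh : 0 ≤ h) :
    f (a + h) - f a ≤ f (b + h) - f b := by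
  have hah : a + h ∈ s := hf.1.ordConnected.out ha hbh ⟨by linarith, by linarith⟩
  have hb : b ∈ s := hf.1.ordConnected.out ha hbh ⟨hab, by linarith⟩
  rcases hh.eq_or_lt with rfl | hh
  · simp
  rcases hab.eq_or_lt with rfl | hab
  · rfl
  -- slope on `[a, a + h]` ≤ slope on `[a, b + h]` ≤ slope on `[b, b + h]`
  have h1 := hf.secant_mono ha hah hbh (by linarith) (by linarith) (by linarith : a + h ≤ b + h)
  have h2 := hf.secant_mono hbh ha hb (by linarith) (by linarith) hab.le
  rw [add_sub_cancel_left] at h1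
  rw [← neg_sub (f (b + h)) (f a), ← neg_sub (b + h) a, neg_div_neg_eq, ← neg_sub (f (b + h)) (f b),
    show b - (b + h) = -h by ring, neg_div_neg_eq] at h2
  exact (div_le_div_iff_of_pos_right hh).mp (h1.trans h2)

namespace Real

theorem Gamma_mul_Gamma_add_le {a b h : ℝ} (ha : 0 < a) (hab : a ≤ b) (hh : 0 ≤ h) :
    Gamma b * Gamma (a + h) ≤ Gamma a * Gamma (b + h) := by
  have hb : 0 < b := ha.trans_le hab
  have := convexOn_log_Gamma.map_add_sub_map_le ha (Set.mem_Ioi.2 (by linarith)) hab hh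
  simp only [Function.comp] at this
  rw [← log_le_log_iff (by positivity) (by positivity), log_mul (by positivity) (by positivity),
    log_mul (by positivity) (by positivity)]
  linarith

theorem Gamma_mul_Gamma_div_Gamma_add_le {x y x' y' : ℝ} (hx : 0 < x) (hy : 0 < y)
    (hxx' : x ≤ x') (hyy' : y ≤ y') :
    Gamma x' * Gamma y' / Gamma (x' + y') ≤ Gamma x * Gamma y / Gamma (x + y) := by
  have hx' : 0 < x' := hx.trans_le hxx'
  have hy' : 0 < y' := hy.trans_le hyy'
  have h1 := Gamma_mul_Gamma_add_le hx hxx' hy'.le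
  have h2 := Gamma_mul_Gamma_add_le hy hyy' hx.le
  rw [div_le_div_iff₀ (by positivity) (by positivity)]
  refine le_of_mul_le_mul_right ?_ (Gamma_pos_of_pos (by positivity : 0 < x + y'))
  calc Gamma x' * Gamma y' * Gamma (x + y) * Gamma (x + y')
      = (Gamma x' * Gamma (x + y')) * (Gamma y' * Gamma (y + x)) := by rw [add_comm y]; ring
    _ ≤ (Gamma x * Gamma (x' + y')) * (Gamma y * Gamma (y' + x)) := by gcongr
    _ = Gamma x * Gamma y * Gamma (x' + y') * Gamma (x + y') := by rw [add_comm y']; ring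

end Real

theorem sum_antidiagonal_pow_div_factorial_mul {K : Type*} [Field K] [CharZero K] (c d : K)
    (n : ℕ) : ∑ p ∈ antidiagonal n, c ^ p.1 / p.1 ! * (d ^ p.2 / p.2 !) = (c + d) ^ n / n ! := by
  rw [(Commute.all c d).add_pow', sum_div]
  refine sum_congr rfl fun p hp => ?_
  have hfac : ((p.1 + p.2)! : K) ≠ 0 := Nat.cast_ne_zero.mpr (Nat.factorial_ne_zero _)
  rw [← mem_antidiagonal.mp hp, nsmul_eq_mul, Nat.cast_add_choose]
  field_simp

noncomputable def gammaWeight (α x c : ℝ) (k : ℕ) : ℝ := Gamma (α * k + x) * c ^ k / k !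

section gammaWeight

variable {α x y c d : ℝ}

theorem gammaWeight_zero (α x c : ℝ) : gammaWeight α x c 0 = Gamma x := by
  simp [gammaWeight]

theorem sum_antidiagonal_gammaWeight_mul_le (hα : 0 ≤ α) (hx : 0 < x) (hy : 0 < y) (hc : 0 ≤ c)
    (hd : 0 ≤ d) (n : ℕ) :
    ∑ p ∈ antidiagonal n, gammaWeight α x c p.1 * gammaWeight α y d p.2 ≤
      Gamma x * Gamma y / Gamma (x + y) * gammaWeight α (x + y) (c + d) n := by
  have hbeta : ∀ p ∈ antidiagonal n, Gamma (α * p.1 + x) * Gamma (α * p.2 + y) ≤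
      Gamma x * Gamma y / Gamma (x + y) * Gamma (α * n + (x + y)) := by
    intro p hp
    have h := Real.Gamma_mul_Gamma_div_Gamma_add_le hx hy
      (le_add_of_nonneg_left (by positivity : 0 ≤ α * p.1))
      (le_add_of_nonneg_left (by positivity : 0 ≤ α * p.2))
    have hn : (p.1 : ℝ) + p.2 = n := by exact_mod_cast mem_antidiagonal.mp hp
    rwa [div_le_iff₀ (Gamma_pos_of_pos (by positivity)),
      show α * p.1 + x + (α * p.2 + y) = α * n + (x + y) by rw [← hn]; ring] at h
  calc ∑ p ∈ antidiagonal n, gammaWeight α x c p.1 * gammaWeight α y d p.2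
      ≤ ∑ p ∈ antidiagonal n, Gamma x * Gamma y / Gamma (x + y) * Gamma (α * n + (x + y)) *
          (c ^ p.1 / p.1 ! * (d ^ p.2 / p.2 !)) := by
        refine sum_le_sum fun p hp => ?_
        rw [gammaWeight, gammaWeight, mul_div_assoc, mul_div_assoc, mul_mul_mul_comm]
        exact mul_le_mul_of_nonneg_right (hbeta p hp) (by positivity)
    _ = Gamma x * Gamma y / Gamma (x + y) * gammaWeight α (x + y) (c + d) n := by
        rw [← mul_sum, sum_antidiagonal_pow_div_factorial_mul, gammaWeight]
        ring

theorem abs_coeff_mul_le_gammaWeight {f g : ℝ⟦X⟧} {A B : ℝ} (hα : 0 ≤ α) (hx : 0 < x)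
    (hy : 0 < y) (hc : 0 ≤ c) (hd : 0 ≤ d) (hf : ∀ k, |coeff k f| ≤ A * gammaWeight α x c k)
    (hg : ∀ k, |coeff k g| ≤ B * gammaWeight α y d k) (n : ℕ) :
    |coeff n (f * g)| ≤
      A * B * (Gamma x * Gamma y / Gamma (x + y)) * gammaWeight α (x + y) (c + d) n := by
  have hA : 0 ≤ A := nonneg_of_mul_nonneg_left ((abs_nonneg _).trans (hf 0))
    (by rw [gammaWeight_zero]; exact Gamma_pos_of_pos hx)
  have hB : 0 ≤ B := nonneg_of_mul_nonneg_left ((abs_nonneg _).trans (hg 0))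
    (by rw [gammaWeight_zero]; exact Gamma_pos_of_pos hy)
  calc |coeff n (f * g)| ≤ ∑ p ∈ antidiagonal n, |coeff p.1 f| * |coeff p.2 g| := by
        rw [coeff_mul]
        exact (abs_sum_le_sum_abs _ _).trans_eq (sum_congr rfl fun p _ => abs_mul _ _)
    _ ≤ ∑ p ∈ antidiagonal n, A * gammaWeight α x c p.1 * (B * gammaWeight α y d p.2) :=
        sum_le_sum fun p _ => mul_le_mul (hf _) (hg _) (abs_nonneg _) ((abs_nonneg _).trans (hf _))
    _ = A * B * ∑ p ∈ antidiagonal n, gammaWeight α x c p.1 * gammaWeight α y d p.2 := by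
        rw [mul_sum]
        exact sum_congr rfl fun p _ => by ring
    _ ≤ _ := by
        rw [mul_assoc (A * B)]
        exact mul_le_mul_of_nonneg_left (sum_antidiagonal_gammaWeight_mul_le hα hx hy hc hd n)
          (mul_nonneg hA hB)

theorem exists_abs_coeff_pow_le_gammaWeight {g : ℝ⟦X⟧} (hα : 0 ≤ α) (hx : 0 < x) (hc : 0 ≤ c)
    (hg : ∀ k, |coeff k g| ≤ gammaWeight α x c k) {L : ℕ} (hL : 1 ≤ L) :
    ∃ A, ∀ n, |coeff n (g ^ L)| ≤ A * gammaWeight α (L * x) (L * c) n := by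
  induction L, hL using Nat.le_induction with
  | base => exact ⟨1, by simpa using hg⟩
  | succ L hL ih =>
    obtain ⟨A, hA⟩ := ih
    have hLx : 0 < (L : ℝ) * x := by positivity
    refine ⟨A * 1 * (Gamma (L * x) * Gamma x / Gamma (L * x + x)), fun n => ?_⟩
    have h := abs_coeff_mul_le_gammaWeight hα hLx hx (by positivity) hc hA
      (fun k => by rw [one_mul]; exact hg k) n
    have hcast : ∀ z : ℝ, ((L + 1 : ℕ) : ℝ) * z = L * z + z := fun z => by push_cast; ring
    rwa [hcast, hcast, pow_succ]

theorem summable_gammaWeight_mul_rpow_div_Gamma (hα : 0 ≤ α) (hx : 0 < x) {r : ℝ} (hr : 0 < r)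
    (c : ℝ) :
    Summable fun i : ℕ => gammaWeight α x c i * r ^ (α * i + x - 1) / Gamma (α * i + x) := by
  refine ((Real.summable_pow_div_factorial (c * r ^ α)).mul_left (r ^ (x - 1))).congr
    fun i => ?_
  have hΓ : Gamma (α * i + x) ≠ 0 := (Gamma_pos_of_pos (by positivity)).ne'
  rw [gammaWeight, show α * i + x - 1 = α * i + (x - 1) by ring, rpow_add hr, rpow_mul hr.le,
    rpow_natCast, mul_pow]
  field_simp

end gammaWeight

theorem sum_pdf_series_abs_convergent_general
    (α μ rh : ℝ) (hα : 0 < α) (hμ : 0 < μ)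
    (L : ℕ) (hL : 1 ≤ L) (r : ℝ) (hr : 0 < r) :
    Summable (fun i : ℕ =>
      |deltaCoef α μ rh L i| * r ^ (α * (i : ℝ) + α * μ * (L : ℝ) - 1) /
        Real.Gamma (α * (i : ℝ) + α * μ * (L : ℝ))) := by
  set q := -μ * rh ^ (-α)
  set g : ℝ⟦X⟧ := mk fun k => Gamma (α * (k + μ)) * q ^ k / (k ! : ℝ)
  have hg0 : constantCoeff g = Gamma (α * μ) := by simp [g]
  have hδ : ∀ i, deltaCoef α μ rh L i = coeff i (g ^ L) := by
    refine eq_coeff_pow_of_miller_recurrence (hg0 ▸ (Gamma_pos_of_pos (by positivity)).ne')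
      (by rw [hg0, deltaCoef]) fun n => ?_
    rw [deltaCoef, hg0]
    congr 1
    refine sum_congr rfl fun l _ => ?_
    simp only [g, coeff_mk]
    push_cast
    ring
  have hg : ∀ k, |coeff k g| ≤ gammaWeight α (α * μ) |q| k := fun k => by
    simp only [g, coeff_mk, gammaWeight, abs_div, abs_mul, abs_pow, Nat.abs_cast, mul_add]
    rw [abs_of_pos (Gamma_pos_of_pos (by positivity))]
  obtain ⟨A, hA⟩ := exists_abs_coeff_pow_le_gammaWeight hα.le (by positivity) (abs_nonneg q) hg hL
  rw [show (L : ℝ) * (α * μ) = α * μ * L by ring] at hA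
  refine .of_nonneg_of_le (fun i => by positivity) (fun i => ?_)
    ((summable_gammaWeight_mul_rpow_div_Gamma (x := α * μ * L) hα.le (by positivity) hr
      (L * |q|)).mul_left A)
  rw [hδ, mul_div_assoc, mul_div_assoc, ← mul_assoc]
  exact mul_le_mul_of_nonneg_right (hA i) (by positivity)

/-- Absolute convergence of the sum-PDF series. -/
theorem sum_pdf_series_abs_convergent
    (α μ rh : ℝ) (hα : 0 < α) (hμ : 0 < μ) (hrh : 0 < rh)
    (L : ℕ) (hL : 1 ≤ L) (r : ℝ) (hr : 0 < r) :
    Summable (fun i : ℕ =>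
      |deltaCoef α μ rh L i| * r ^ (α * (i : ℝ) + α * μ * (L : ℝ) - 1) /
        Real.Gamma (α * (i : ℝ) + α * μ * (L : ℝ))) :=
  sum_pdf_series_abs_convergent_general α μ rh hα hμ L hL r hr
end

section
/- Let μ, r̂ > 0, 0 < α < 1, and let L ≥ 1 be an integer. Then for every integer i ≥ 1, the recursively defined coefficients satisfy |δ_i| < Γ(αμ)^L · (2·μ·L·Γ(α(1+μ))·r̂^{−α})^i. -/
/-!
The `δ_i` are the coefficients of `f ^ L` for the power series
`f = ∑ Γ(α (l + μ)) (-μ r̂^(-α))^l / l! X^l`: the recursion is J. C. P. Miller's recurrence,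
read off from `f · (f ^ L)' = L f ^ L f'`. Convexity and log-convexity of `Γ` give `Γ ≥ π / 4`
on `(0, ∞)` and, as `α ≤ 1`, `Γ(y + α) ≤ Γ(y) max(1, y)`; together these bound the `l`-th
coefficient of `f` by `(2 / π) Γ(αμ) K^l` for `l ≥ 1`, where `K = 2 μ Γ(α (1 + μ)) r̂^(-α)`.
Multiplying out `f ^ L` one factor at a time then bounds its `i`-th coefficient by
`(2 / π) Γ(αμ)^L (L K)^i`, and `2 / π < 1`.
-/

open MeasureTheory Real

namespace Real

open Set

theorem Gamma_le_max_of_mem_Icc {x y z : ℝ} (hx : 0 < x) (hxy : x ≤ y) (hz : z ∈ Icc x y) :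
    Gamma z ≤ max (Gamma x) (Gamma y) :=
  convexOn_Gamma.le_on_segment hx (hx.trans_le hxy) (by rwa [segment_eq_Icc hxy])

theorem Gamma_le_one_of_mem_Icc {x : ℝ} (hx : x ∈ Icc 1 2) : Gamma x ≤ 1 := by
  simpa [Gamma_two] using Gamma_le_max_of_mem_Icc one_pos one_le_two hx

theorem Gamma_three_div_two_sq : Gamma (3 / 2) ^ 2 = π / 4 := by
  rw [show (3 / 2 : ℝ) = 1 / 2 + 1 by norm_num, Gamma_add_one (by norm_num), Gamma_one_half_eq,
    mul_pow, sq_sqrt pi_pos.le]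
  ring

theorem pi_div_four_le_Gamma_of_mem_Icc {x : ℝ} (hx : x ∈ Icc 1 2) : π / 4 ≤ Gamma x := by
  have hx0 : 0 < x := one_pos.trans_le hx.1
  have hy0 : 0 < 3 - x := by linarith [hx.2]
  -- log-convexity at the midpoint `3 / 2` of `x` and `3 - x`, where `Γ (3 - x) ≤ 1`
  have hmid : Gamma (3 / 2) ≤ √(Gamma x * Gamma (3 - x)) := by
    have := Gamma_mul_add_mul_le_rpow_Gamma_mul_rpow_Gamma hx0 hy0 one_half_pos one_half_pos
      (add_halves 1)
    rwa [show 1 / 2 * x + 1 / 2 * (3 - x) = 3 / 2 by ring, ← mul_rpow (Gamma_pos_of_pos hx0).le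
      (Gamma_pos_of_pos hy0).le, ← sqrt_eq_rpow] at this
  have hprod : π / 4 ≤ Gamma x * Gamma (3 - x) := by
    rw [← Gamma_three_div_two_sq]
    simpa [sq_sqrt (mul_pos (Gamma_pos_of_pos hx0) (Gamma_pos_of_pos hy0)).le] using
      pow_le_pow_left₀ (Gamma_pos_of_pos (by norm_num)).le hmid 2
  have hle : Gamma (3 - x) ≤ 1 :=
    Gamma_le_one_of_mem_Icc ⟨by linarith [hx.2], by linarith [hx.1]⟩
  nlinarith [Gamma_pos_of_pos hx0]

theorem pi_div_four_le_Gamma {x : ℝ} (hx : 0 < x) : π / 4 ≤ Gamma x := by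
  obtain ⟨x₀, hx₀, hmin⟩ := exists_isMinOn_Gamma_Ioi
  exact (pi_div_four_le_Gamma_of_mem_Icc (Ioo_subset_Icc_self hx₀)).trans (hmin hx)

theorem le_four_mul_Gamma {x : ℝ} (hx : 0 < x) : x ≤ 4 * Gamma x := by
  have := pi_gt_three
  rcases le_or_gt x 2 with hx2 | hx2
  · linarith [pi_div_four_le_Gamma hx]
  · have h := pi_div_four_le_Gamma (x := x - 1) (by linarith)
    rw [show x = x - 1 + 1 by ring, Gamma_add_one (by linarith)]
    nlinarith

theorem Gamma_add_le_mul_max {x s : ℝ} (hx : 0 < x) (hs : s ∈ Icc 0 1) :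
    Gamma (x + s) ≤ Gamma x * max 1 x := by
  calc Gamma (x + s) ≤ max (Gamma x) (Gamma (x + 1)) :=
        Gamma_le_max_of_mem_Icc hx (by linarith) ⟨by linarith [hs.1], by linarith [hs.2]⟩
    _ = Gamma x * max 1 x := by
        rw [Gamma_add_one hx.ne', mul_max_of_nonneg _ _ (Gamma_pos_of_pos hx).le, mul_one,
          mul_comm]

theorem max_one_add_mul_le_Gamma {x a : ℝ} (hx : 0 < x) (ha : a ∈ Icc 0 1) {k : ℕ}
    (hk : 1 ≤ k) :
    max 1 (x + k * a) ≤ 2 * (k + 1) * Gamma (x + a) := by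
  have hxa : 0 < x + a := by linarith [ha.1]
  have hG := pi_div_four_le_Gamma hxa
  have h4 := le_four_mul_Gamma hxa
  have hk' : (1 : ℝ) ≤ k := by exact_mod_cast hk
  have := pi_gt_three
  refine max_le (by nlinarith) ?_
  nlinarith [mul_le_mul_of_nonneg_left ha.2 (by linarith : (0 : ℝ) ≤ k - 1)]

theorem Gamma_add_succ_mul_le {x a : ℝ} (hx : 0 < x) (ha : a ∈ Icc 0 1) (l : ℕ) :
    Gamma (x + (l + 1) * a) ≤ Gamma (x + a) * (2 * Gamma (x + a)) ^ l * (l + 1).factorial := by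
  induction l with
  | zero => simp
  | succ l ih =>
    have hpos : 0 < x + (l + 1) * a := by nlinarith [ha.1]
    have hstep := Gamma_add_le_mul_max hpos ha
    have hmax := max_one_add_mul_le_Gamma hx ha (k := l + 1) le_add_self
    push_cast at hmax ⊢
    calc Gamma (x + (l + 1 + 1) * a) = Gamma (x + (l + 1) * a + a) := by ring_nf
      _ ≤ Gamma (x + (l + 1) * a) * max 1 (x + (l + 1) * a) := hstep
      _ ≤ Gamma (x + a) * (2 * Gamma (x + a)) ^ l * (l + 1).factorial *
          (2 * (l + 1 + 1) * Gamma (x + a)) :=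
        mul_le_mul ih hmax (zero_le_one.trans (le_max_left _ _))
          (by have := Gamma_pos_of_pos (hx.trans_le (le_add_of_nonneg_right ha.1)); positivity)
      _ = _ := by rw [Nat.factorial_succ (l + 1)]; push_cast; ring

end Real

open Finset

theorem sum_range_pow_sub_le_one_add_pow {x : ℝ} (hx : 0 ≤ x) (n : ℕ) :
    ∑ k ∈ range (n + 1), x ^ (n - k) ≤ (1 + x) ^ n := by
  rw [add_pow]
  refine sum_le_sum fun k hk => ?_
  rw [one_pow, one_mul]
  exact le_mul_of_one_le_right (by positivity)
    (by exact_mod_cast Nat.choose_pos (Nat.lt_succ_iff.1 (mem_range.1 hk)))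

namespace PowerSeries

theorem coeff_zero_pow {R : Type*} [Semiring R] (f : R⟦X⟧) (n : ℕ) :
    coeff 0 (f ^ n) = coeff 0 f ^ n := by
  rw [coeff_zero_eq_constantCoeff_apply, map_pow, ← coeff_zero_eq_constantCoeff_apply]

section CommRing

variable {R : Type*} [CommRing R]

theorem mul_derivative_pow (f : R⟦X⟧) (L : ℕ) :
    f * d⁄dX R (f ^ L) = L • (f ^ L * d⁄dX R f) := by
  rcases L with _ | L
  · simp
  · rw [Derivation.leibniz_pow, mul_smul_comm, smul_eq_mul, ← mul_assoc, ← pow_succ',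
      Nat.add_sub_cancel]

-- J. C. P. Miller's recurrence for the coefficients of a power of a power series
theorem coeff_zero_mul_coeff_succ_pow (f : R⟦X⟧) (L i : ℕ) :
    ((i : R) + 1) * coeff 0 f * coeff (i + 1) (f ^ L) =
      ∑ l ∈ range (i + 1), (((l : R) + 1) * L + ((l : R) + 1) - ((i : R) + 1)) *
        coeff (l + 1) f * coeff (i - l) (f ^ L) := by
  have h := congrArg (coeff i) (mul_derivative_pow f L)
  rw [map_nsmul, coeff_mul, coeff_mul,
    ← Nat.sum_antidiagonal_swap (f := fun p => coeff p.1 (f ^ L) * coeff p.2 (d⁄dX R f))] at h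
  simp only [coeff_derivative, Prod.fst_swap, Prod.snd_swap] at h
  set g := f ^ L
  -- split `∑ f_k g_j j` over the antidiagonal of `i + 1` at either end
  have hi : ∑ p ∈ antidiagonal i, coeff p.1 f * (coeff (p.2 + 1) g * (p.2 + 1)) =
      coeff 0 f * coeff (i + 1) g * (i + 1) +
        ∑ p ∈ antidiagonal i, coeff (p.1 + 1) f * coeff p.2 g * p.2 := by
    have := (Nat.sum_antidiagonal_succ' (n := i)
      (f := fun p => coeff p.1 f * coeff p.2 g * p.2)).symm.trans Nat.sum_antidiagonal_succ
    simpa [mul_assoc] using this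
  rw [hi, nsmul_eq_mul, mul_sum] at h
  rw [← Nat.sum_antidiagonal_eq_sum_range_succ (fun k j =>
    (((k : R) + 1) * L + ((k : R) + 1) - ((i : R) + 1)) * coeff (k + 1) f * coeff j g)]
  have hterm : ∀ p ∈ antidiagonal i,
      (((p.1 : R) + 1) * L + ((p.1 : R) + 1) - ((i : R) + 1)) * coeff (p.1 + 1) f * coeff p.2 g =
        L * (coeff p.2 g * (coeff (p.1 + 1) f * (p.1 + 1))) -
          coeff (p.1 + 1) f * coeff p.2 g * p.2 := by
    intro p hp
    rw [← mem_antidiagonal.1 hp]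
    push_cast
    ring
  rw [sum_congr rfl hterm, sum_sub_distrib]
  linear_combination h

end CommRing

section Normed

variable {R : Type*} [NormedRing R] [NormOneClass R]

theorem norm_coeff_pow_le {f : R⟦X⟧} {a q K : ℝ} (hq : q ≤ 1) (hK : 0 ≤ K)
    (h₀ : ‖coeff 0 f‖ ≤ a) (h : ∀ l, 1 ≤ l → ‖coeff l f‖ ≤ q * a * K ^ l) (M : ℕ) {i : ℕ}
    (hi : 1 ≤ i) : ‖coeff i (f ^ M)‖ ≤ q * a ^ M * (M * K) ^ i := by
  have ha : 0 ≤ a := (norm_nonneg _).trans h₀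
  induction M generalizing i with
  | zero => simp [coeff_one, Nat.one_le_iff_ne_zero.1 hi]
  | succ M ih =>
    have hweak : ∀ j, ‖coeff j (f ^ M)‖ ≤ a ^ M * (M * K) ^ j := by
      intro j
      rcases Nat.eq_zero_or_pos j with rfl | hj
      · simpa [coeff_zero_pow] using
          (norm_pow_le _ M).trans (pow_le_pow_left₀ (norm_nonneg _) h₀ M)
      · exact (ih hj).trans (mul_le_of_le_one_left (by positivity) hq |>.trans_eq' (by ring))
    have hterm : ∀ k ∈ range (i + 1), ‖coeff k f * coeff (i - k) (f ^ M)‖ ≤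
        q * a ^ (M + 1) * K ^ i * (M : ℝ) ^ (i - k) := by
      intro k hk
      refine (norm_mul_le _ _).trans ?_
      rcases Nat.eq_zero_or_pos k with rfl | hk₀
      · calc ‖coeff 0 f‖ * ‖coeff (i - 0) (f ^ M)‖ ≤ a * (q * a ^ M * (M * K) ^ i) :=
              mul_le_mul h₀ (ih hi) (norm_nonneg _) ha
          _ = _ := by rw [Nat.sub_zero]; ring
      · calc ‖coeff k f‖ * ‖coeff (i - k) (f ^ M)‖
            ≤ q * a * K ^ k * (a ^ M * (M * K) ^ (i - k)) :=
              mul_le_mul (h k hk₀) (hweak _) (norm_nonneg _) ((norm_nonneg _).trans (h k hk₀))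
          _ = q * a ^ (M + 1) * (K ^ k * K ^ (i - k)) * (M : ℝ) ^ (i - k) := by ring
          _ = _ := by rw [← pow_add, Nat.add_sub_cancel' (Nat.lt_succ_iff.1 (mem_range.1 hk))]
    have hqK : 0 ≤ q * a ^ (M + 1) * K ^ i := by
      rw [pow_succ', ← mul_assoc, mul_right_comm]
      exact mul_nonneg ((norm_nonneg _).trans (h i hi)) (pow_nonneg ha M)
    calc ‖coeff i (f ^ (M + 1))‖
        = ‖∑ k ∈ range (i + 1), coeff k f * coeff (i - k) (f ^ M)‖ := by
          rw [pow_succ', coeff_mul, Nat.sum_antidiagonal_eq_sum_range_succ_mk]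
      _ ≤ ∑ k ∈ range (i + 1), q * a ^ (M + 1) * K ^ i * (M : ℝ) ^ (i - k) :=
          (norm_sum_le _ _).trans (sum_le_sum hterm)
      _ ≤ q * a ^ (M + 1) * K ^ i * (1 + M) ^ i := by
          rw [← mul_sum]
          exact mul_le_mul_of_nonneg_left (sum_range_pow_sub_le_one_add_pow M.cast_nonneg i) hqK
      _ = q * a ^ (M + 1) * ((M + 1 : ℕ) * K) ^ i := by rw [mul_pow]; push_cast; ring

end Normed

end PowerSeries

open PowerSeries

noncomputable def deltaSeries (α μ rh : ℝ) : ℝ⟦X⟧ :=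
  mk fun l => Gamma (α * (l + μ)) * (-μ * rh ^ (-α)) ^ l / l.factorial

theorem coeff_zero_deltaSeries (α μ rh : ℝ) : coeff 0 (deltaSeries α μ rh) = Gamma (α * μ) := by
  simp [deltaSeries]

theorem deltaCoef_eq_coeff_deltaSeries_pow {α μ rh : ℝ} (hΓ : Gamma (α * μ) ≠ 0) (L i : ℕ) :
    deltaCoef α μ rh L i = coeff i (deltaSeries α μ rh ^ L) := by
  induction i using Nat.strong_induction_on with
  | _ i ih =>
    rcases i with _ | i
    · rw [deltaCoef, coeff_zero_pow, coeff_zero_deltaSeries]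
    have hm := coeff_zero_mul_coeff_succ_pow (deltaSeries α μ rh) L i
    rw [coeff_zero_deltaSeries] at hm
    calc deltaCoef α μ rh L (i + 1)
        = 1 / ((i + 1) * Gamma (α * μ)) * ∑ l ∈ range (i + 1),
            ((l + 1) * L + (l + 1) - (i + 1)) * coeff (l + 1) (deltaSeries α μ rh) *
              coeff (i - l) (deltaSeries α μ rh ^ L) := by
          rw [deltaCoef]
          congr 1
          refine sum_congr rfl fun l hl => ?_
          rw [ih (i - l) (by omega), deltaSeries, coeff_mk]
          push_cast
          ring
      _ = 1 / ((i + 1) * Gamma (α * μ)) *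
            ((i + 1) * Gamma (α * μ) * coeff (i + 1) (deltaSeries α μ rh ^ L)) := by rw [hm]
      _ = coeff (i + 1) (deltaSeries α μ rh ^ L) := by field_simp

theorem abs_coeff_deltaSeries_le {α μ rh : ℝ} (hμ : 0 < μ) (hrh : 0 < rh) (hα0 : 0 < α)
    (hα1 : α ≤ 1) {l : ℕ} (hl : 1 ≤ l) :
    |coeff l (deltaSeries α μ rh)| ≤
      2 / π * Gamma (α * μ) * (2 * μ * Gamma (α * (1 + μ)) * rh ^ (-α)) ^ l := by
  obtain ⟨n, rfl⟩ := Nat.exists_eq_add_of_le' hl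
  have hx : 0 < α * μ := mul_pos hα0 hμ
  set g := Gamma (α * (1 + μ))
  have hg : Gamma (α * μ + (n + 1) * α) ≤ g * (2 * g) ^ n * (n + 1).factorial := by
    simpa [g, mul_add, add_comm] using Gamma_add_succ_mul_le hx ⟨hα0.le, hα1⟩ n
  have hhalf : 1 / 2 ≤ 2 / π * Gamma (α * μ) := by
    have := pi_div_four_le_Gamma hx
    rw [div_mul_eq_mul_div, le_div_iff₀ pi_pos]
    linarith
  have hr : 0 < μ * rh ^ (-α) := mul_pos hμ (rpow_pos_of_pos hrh _)
  calc |coeff (n + 1) (deltaSeries α μ rh)|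
      = Gamma (α * μ + (n + 1) * α) * (μ * rh ^ (-α)) ^ (n + 1) / (n + 1).factorial := by
        rw [deltaSeries, coeff_mk, abs_div, abs_mul, abs_pow, neg_mul, abs_neg, abs_of_pos hr,
          abs_of_pos (Gamma_pos_of_pos (by positivity)), Nat.abs_cast]
        push_cast
        ring_nf
    _ ≤ g * (2 * g) ^ n * (n + 1).factorial * (μ * rh ^ (-α)) ^ (n + 1) / (n + 1).factorial :=
        by gcongr
    _ = 1 / 2 * (2 * μ * g * rh ^ (-α)) ^ (n + 1) := by
        field_simp
        ring
    _ ≤ _ := by gcongr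

/-- Geometric bound on |δ_i| for 0 < α < 1. -/
theorem deltaCoef_abs_lt_of_alpha_lt_one
    (α μ rh : ℝ) (hμ : 0 < μ) (hrh : 0 < rh) (hα0 : 0 < α) (hα1 : α < 1)
    (L : ℕ) (hL : 1 ≤ L) (i : ℕ) (hi : 1 ≤ i) :
    |deltaCoef α μ rh L i| <
      Real.Gamma (α * μ) ^ L *
        (2 * μ * (L : ℝ) * Real.Gamma (α * (1 + μ)) * rh ^ (-α)) ^ i := by
  have hΓ : 0 < Gamma (α * μ) := Gamma_pos_of_pos (mul_pos hα0 hμ)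
  set K := 2 * μ * Gamma (α * (1 + μ)) * rh ^ (-α)
  have hK : 0 < K := by
    have := Gamma_pos_of_pos (mul_pos hα0 (add_pos one_pos hμ))
    have := rpow_pos_of_pos hrh (-α)
    positivity
  have hq : 2 / π < 1 := (div_lt_one pi_pos).2 (by linarith [pi_gt_three])
  have hbound := norm_coeff_pow_le (f := deltaSeries α μ rh) hq.le hK.le
    (by rw [coeff_zero_deltaSeries, norm_of_nonneg hΓ.le])
    (fun l hl => by simpa only [norm_eq_abs] using abs_coeff_deltaSeries_le hμ hrh hα0 hα1.le hl)
    L hi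
  rw [deltaCoef_eq_coeff_deltaSeries_pow hΓ.ne', ← norm_eq_abs]
  calc ‖coeff i (deltaSeries α μ rh ^ L)‖ ≤ 2 / π * Gamma (α * μ) ^ L * (L * K) ^ i := hbound
    _ < Gamma (α * μ) ^ L * (L * K) ^ i := by
        rw [mul_assoc]
        exact mul_lt_of_lt_one_left (by positivity) hq
    _ = _ := by ring
end

section
/- Let μ, r̂ > 0, 0 < α < 2, let L ≥ 1 be an integer, and let G > 0. Define, for s > 0, P_e(s) = (1/2)·(α·μ^μ/(Γ(μ)·r̂^{αμ}))^L · ∑_{i=0}^∞ δ_i · (4·G·s/L)^{−(αi + αμL)/2} / Γ((αi + αμL)/2 + 1) (the exact average symbol error rate series of the L-branch equal-gain combining receiver). Then in the high-SNR regime P_e decays with diversity order αμL/2; precisely, lim_{s→∞} s^{αμL/2} · P_e(s) = (L/(4G))^{αμL/2} · (α·μ^μ·Γ(αμ)/(Γ(μ)·r̂^{αμ}))^L / (2·Γ(αμL/2 + 1)). -/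
/-!
For `s > 0`, `s ^ (αμL/2) * P_e s` is, up to the prefactor, the power series `∑ cᵢ zⁱ` in
`z = s ^ (-α/2)` with `cᵢ = δᵢ (4G/L) ^ (-(αi + αμL)/2) / Γ((αi + αμL)/2 + 1)`. As `s → ∞`, `z → 0`,
so once the `cᵢ` are shown to grow at most geometrically, dominated convergence leaves the
constant term `c₀`, which is the claimed limit.

The recursion for `δ` is a convolution, and induction along it gives
`|δᵢ| ≤ A Dⁱ (1 + Γ(αi+1)/i!)`: for `α ≤ 2` this weight is submultiplicative up to a constant
factor (for `α ≥ 1` by comparing Beta integrals). Legendre's duplication formula then gives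
`Γ(αi+1)/i! ≤ 4·4ⁱ Γ(αi/2+1)`, again because `α ≤ 2`, and `Γ(αi/2+1)` is at most twice the
denominator `Γ((αi + αμL)/2 + 1)`.
-/

open MeasureTheory Real

open scoped Nat

namespace Real

lemma Gamma_le_one_of_mem_Icc_s18 {x : ℝ} (h1 : 1 ≤ x) (h2 : x ≤ 2) : Gamma x ≤ 1 := by
  have := convexOn_Gamma.2 (Set.mem_Ioi.2 one_pos) (Set.mem_Ioi.2 two_pos)
    (sub_nonneg.2 h2) (sub_nonneg.2 h1) (by ring)
  simp only [smul_eq_mul, Gamma_one, Gamma_two] at this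
  rw [show (2 - x) * 1 + (x - 1) * 2 = x by ring] at this
  linarith

lemma one_le_Gamma {x : ℝ} (h : 2 ≤ x) : 1 ≤ Gamma x :=
  Gamma_two ▸ Gamma_strictMonoOn_Ici.monotoneOn (Set.mem_Ici.2 le_rfl) (Set.mem_Ici.2 h) h

lemma one_half_le_Gamma {x : ℝ} (hx : 0 < x) : 1 / 2 ≤ Gamma x := by
  have of_one_le : ∀ y, 1 ≤ y → 1 / 2 ≤ Gamma y := by
    intro y hy
    rcases le_total 2 y with h2 | h2
    · linarith [one_le_Gamma h2]
    · have := one_le_Gamma (show 2 ≤ y + 1 by linarith)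
      rw [Gamma_add_one (by positivity)] at this
      nlinarith [Gamma_pos_of_pos (show 0 < y by linarith)]
  rcases le_total 1 x with h1 | h1
  · exact of_one_le x h1
  · have := of_one_le (x + 1) (by linarith)
    rw [Gamma_add_one hx.ne'] at this
    nlinarith [Gamma_pos_of_pos hx]

lemma min_one_mul_Gamma_le {x y : ℝ} (hx : 0 < x) (hxy : x ≤ y) :
    min x 1 * Gamma x ≤ 2 * Gamma y := by
  have hy := one_half_le_Gamma (hx.trans_le hxy)
  rcases le_total 1 x with h1 | h1
  · rw [min_eq_right h1, one_mul]
    rcases le_total 2 x with h2 | h2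
    · linarith [Gamma_strictMonoOn_Ici.monotoneOn h2 (h2.trans hxy) hxy]
    · linarith [Gamma_le_one_of_mem_Icc_s18 h1 h2]
  · rw [min_eq_left h1, ← Gamma_add_one hx.ne']
    linarith [Gamma_le_one_of_mem_Icc_s18 (x := x + 1) (by linarith) (by linarith)]

lemma Gamma_le_two_mul_Gamma {x y : ℝ} (hx : 1 ≤ x) (hxy : x ≤ y) : Gamma x ≤ 2 * Gamma y := by
  simpa [min_eq_right hx] using min_one_mul_Gamma_le (by linarith) hxy

lemma Gamma_add_nat_le {y : ℝ} (hy : 0 < y) (n : ℕ) : Gamma (y + n) ≤ Gamma y * (y + n) ^ n := by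
  induction n with
  | zero => simp
  | succ n ih =>
    have hyn : 0 < y + n := by positivity
    rw [Nat.cast_succ, ← add_assoc, Gamma_add_one hyn.ne']
    calc (y + n) * Gamma (y + n) ≤ (y + n) * (Gamma y * (y + n) ^ n) := by gcongr
      _ = Gamma y * (y + n) ^ (n + 1) := by ring
      _ ≤ Gamma y * (y + n + 1) ^ (n + 1) :=
        mul_le_mul_of_nonneg_left (pow_le_pow_left₀ hyn.le (by linarith) _) (Gamma_pos_of_pos hy).le

lemma min_one_mul_Gamma_add_le {x c : ℝ} (hx : 0 ≤ x) (hc : 0 < c) :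
    min c 1 * Gamma (x + c) ≤ 2 * exp (⌈c⌉₊ * (x + ⌈c⌉₊)) * Gamma (x + 1) := by
  set n := ⌈c⌉₊
  have hmin : min c 1 ≤ min (x + c) 1 := min_le_min_right 1 (by linarith)
  have hG := (Gamma_pos_of_pos (show 0 < x + 1 by positivity)).le
  calc min c 1 * Gamma (x + c) ≤ min (x + c) 1 * Gamma (x + c) := by
        gcongr
    _ ≤ 2 * Gamma (x + 1 + n) :=
        min_one_mul_Gamma_le (by positivity) (by linarith [Nat.le_ceil c])
    _ ≤ 2 * (Gamma (x + 1) * (x + 1 + n) ^ n) := by gcongr; exact Gamma_add_nat_le (by positivity) n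
    _ ≤ 2 * (Gamma (x + 1) * exp (x + n) ^ n) := by
        gcongr
        linarith [add_one_le_exp (x + n)]
    _ = 2 * exp (n * (x + n)) * Gamma (x + 1) := by rw [← exp_nat_mul]; ring

lemma Gamma_mul_Gamma_eq_Gamma_add_mul_integral {a b : ℝ} (ha : 0 < a) (hb : 0 < b) :
    Gamma a * Gamma b = Gamma (a + b) * ∫ x in (0 : ℝ)..1, x ^ (a - 1) * (1 - x) ^ (b - 1) := by
  have h := Complex.Gamma_mul_Gamma_eq_betaIntegral
    (s := (a : ℂ)) (t := (b : ℂ)) (by simpa using ha) (by simpa using hb)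
  have hbeta : Complex.betaIntegral a b
      = ((∫ x in (0 : ℝ)..1, x ^ (a - 1) * (1 - x) ^ (b - 1) : ℝ) : ℂ) := by
    rw [Complex.betaIntegral, ← intervalIntegral.integral_ofReal]
    refine intervalIntegral.integral_congr fun x hx => ?_
    rw [Set.uIcc_of_le zero_le_one] at hx
    simp only [Complex.ofReal_mul, Complex.ofReal_cpow hx.1,
      Complex.ofReal_cpow (sub_nonneg.2 hx.2), Complex.ofReal_sub, Complex.ofReal_one]
  rw [← Complex.ofReal_inj]
  push_cast
  rw [← Complex.Gamma_ofReal, ← Complex.Gamma_ofReal, ← Complex.Gamma_ofReal, h, hbeta]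
  push_cast
  rfl

-- `B(cp+1, cq+1) ≤ B(p+1, q+1)` with the denominators cleared: `t ^ (c * p) ≤ t ^ p` on `[0, 1]`.
lemma Gamma_mul_add_one_mul_Gamma_mul_add_one_le {p q c : ℝ} (hp : 0 ≤ p) (hq : 0 ≤ q)
    (hc : 1 ≤ c) :
    Gamma (c * p + 1) * Gamma (c * q + 1) * Gamma (p + q + 2)
      ≤ Gamma (p + 1) * Gamma (q + 1) * Gamma (c * (p + q) + 2) := by
  have e₁ := Gamma_mul_Gamma_eq_Gamma_add_mul_integral (a := c * p + 1) (b := c * q + 1)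
    (by positivity) (by positivity)
  have e₂ := Gamma_mul_Gamma_eq_Gamma_add_mul_integral (a := p + 1) (b := q + 1)
    (by positivity) (by positivity)
  simp only [add_sub_cancel_right] at e₁ e₂
  rw [e₁, e₂, show c * p + 1 + (c * q + 1) = c * (p + q) + 2 by ring,
    show p + 1 + (q + 1) = p + q + 2 by ring]
  have hint : ∀ {u v : ℝ}, 0 ≤ u → 0 ≤ v →
      IntervalIntegrable (fun x : ℝ => x ^ u * (1 - x) ^ v) volume 0 1 := fun hu hv =>
    ((continuous_id.rpow_const fun _ => Or.inr hu).mul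
      ((continuous_const.sub continuous_id).rpow_const fun _ => Or.inr hv)).intervalIntegrable 0 1
  have hmono : (∫ x in (0 : ℝ)..1, x ^ (c * p) * (1 - x) ^ (c * q))
      ≤ ∫ x in (0 : ℝ)..1, x ^ p * (1 - x) ^ q := by
    refine intervalIntegral.integral_mono_on zero_le_one (hint (by positivity) (by positivity))
      (hint hp hq) fun x hx => ?_
    have hx1 : 0 ≤ 1 - x := sub_nonneg.2 hx.2
    exact mul_le_mul (rpow_le_rpow_of_exponent_ge' hx.1 hx.2 hp (le_mul_of_one_le_left hp hc))
      (rpow_le_rpow_of_exponent_ge' hx1 (by linarith [hx.1]) hq (le_mul_of_one_le_left hq hc))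
      (rpow_nonneg hx1 _) (rpow_nonneg hx.1 _)
  have h₁ := Gamma_pos_of_pos (show 0 < c * (p + q) + 2 by positivity)
  have h₂ := Gamma_pos_of_pos (show 0 < p + q + 2 by positivity)
  calc Gamma (c * (p + q) + 2) * (∫ x in (0 : ℝ)..1, x ^ (c * p) * (1 - x) ^ (c * q))
        * Gamma (p + q + 2)
      ≤ Gamma (c * (p + q) + 2) * (∫ x in (0 : ℝ)..1, x ^ p * (1 - x) ^ q) * Gamma (p + q + 2) := by
        gcongr
    _ = _ := by ring

end Real

noncomputable def gammaRatio (α : ℝ) (j : ℕ) : ℝ := Gamma (α * j + 1) / j !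

section gammaRatio

variable {α : ℝ}

lemma gammaRatio_pos (hα : 0 ≤ α) (j : ℕ) : 0 < gammaRatio α j :=
  div_pos (Gamma_pos_of_pos (by positivity)) (by positivity)

lemma gammaRatio_le_two (hα0 : 0 ≤ α) (hα1 : α ≤ 1) (j : ℕ) : gammaRatio α j ≤ 2 := by
  have hj := Nat.cast_nonneg (α := ℝ) j
  have := Gamma_le_two_mul_Gamma (x := α * j + 1) (y := j + 1) (by nlinarith) (by nlinarith)
  rw [Gamma_nat_eq_factorial] at this
  rwa [gammaRatio, div_le_iff₀ (by positivity)]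

lemma one_half_le_gammaRatio (hα : 1 ≤ α) (j : ℕ) : 1 / 2 ≤ gammaRatio α j := by
  have hj := Nat.cast_nonneg (α := ℝ) j
  have := Gamma_le_two_mul_Gamma (x := j + 1) (y := α * j + 1) (by linarith) (by nlinarith)
  rw [Gamma_nat_eq_factorial] at this
  rw [gammaRatio, le_div_iff₀ (by positivity)]
  linarith

lemma gammaRatio_mul_le (hα : 1 ≤ α) (k l : ℕ) :
    gammaRatio α k * gammaRatio α l ≤ α * gammaRatio α (k + l) := by
  have hk := Nat.cast_nonneg (α := ℝ) k
  have hl := Nat.cast_nonneg (α := ℝ) l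
  set n := k + l
  have hbeta := Gamma_mul_add_one_mul_Gamma_mul_add_one_le hk hl hα
  rw [← Nat.cast_add, Gamma_nat_eq_factorial, Gamma_nat_eq_factorial,
    show (n : ℝ) + 2 = (n + 1) + 1 by ring, Gamma_add_one (s := (n : ℝ) + 1) (by positivity),
    Gamma_nat_eq_factorial, show α * n + 2 = (α * n + 1) + 1 by ring,
    Gamma_add_one (s := α * n + 1) (by positivity)] at hbeta
  have hG := Gamma_pos_of_pos (show 0 < α * n + 1 by positivity)
  rw [gammaRatio, gammaRatio, gammaRatio, div_mul_div_comm, mul_div_assoc',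
    div_le_div_iff₀ (by positivity) (by positivity)]
  refine le_of_mul_le_mul_right ?_ (show (0 : ℝ) < n + 1 by positivity)
  calc Gamma (α * k + 1) * Gamma (α * l + 1) * n ! * (n + 1)
      = Gamma (α * k + 1) * Gamma (α * l + 1) * ((n + 1) * n !) := by ring
    _ ≤ k ! * l ! * ((α * n + 1) * Gamma (α * n + 1)) := hbeta
    _ ≤ k ! * l ! * ((α * (n + 1)) * Gamma (α * n + 1)) := by gcongr; linarith
    _ = α * Gamma (α * n + 1) * (k ! * l !) * (n + 1) := by ring

lemma one_add_gammaRatio_mul_le (hα0 : 0 ≤ α) (hα2 : α ≤ 2) (k l : ℕ) :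
    (1 + gammaRatio α k) * gammaRatio α l ≤ 6 * (1 + gammaRatio α (k + l)) := by
  have hk := gammaRatio_pos hα0 k
  have hl := gammaRatio_pos hα0 l
  have hkl := gammaRatio_pos hα0 (k + l)
  rcases le_total α 1 with hα1 | hα1
  · nlinarith [gammaRatio_le_two hα0 hα1 k, gammaRatio_le_two hα0 hα1 l]
  · -- here `gammaRatio ≥ 1/2`, so the `1` is absorbed into the product
    nlinarith [one_half_le_gammaRatio hα1 k, gammaRatio_mul_le hα1 k l]

lemma gammaRatio_le (hα0 : 0 ≤ α) (hα2 : α ≤ 2) (i : ℕ) :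
    gammaRatio α i ≤ 4 * 4 ^ i * Gamma (α * i / 2 + 1) := by
  set x := α * i with hx
  have hx0 : 0 ≤ x := by positivity
  have hxi : x ≤ 2 * i := by rw [hx]; gcongr
  have hdup := Gamma_mul_Gamma_add_half ((x + 1) / 2)
  rw [show 2 * ((x + 1) / 2) = x + 1 by ring, show (x + 1) / 2 + 1 / 2 = x / 2 + 1 by ring,
    show 1 - (x + 1) = -x by ring, rpow_neg zero_le_two] at hdup
  have hG₁ := Gamma_pos_of_pos (show 0 < (x + 1) / 2 by positivity)
  have hG₂ := Gamma_pos_of_pos (show 0 < x / 2 + 1 by positivity)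
  have hπ : 1 ≤ √π := one_le_sqrt.2 (by linarith [pi_gt_three])
  have h2x : (2 : ℝ) ^ x ≤ 4 ^ i := by
    calc (2 : ℝ) ^ x ≤ 2 ^ ((2 * i : ℕ) : ℝ) := rpow_le_rpow_of_exponent_le one_le_two (by simpa)
      _ = 4 ^ i := by rw [rpow_natCast, pow_mul]; norm_num
  have hhalf : Gamma ((x + 1) / 2) ≤ 4 * i ! := by
    have := min_one_mul_Gamma_le (x := (x + 1) / 2) (y := i + 1) (by positivity) (by linarith)
    rw [Gamma_nat_eq_factorial] at this
    have : 1 / 2 ≤ min ((x + 1) / 2) 1 := le_min (by linarith) (by norm_num)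
    nlinarith
  have hGx : Gamma (x + 1) ≤ Gamma ((x + 1) / 2) * Gamma (x / 2 + 1) * 2 ^ x := by
    have h2 : 0 < (2 : ℝ) ^ x := by positivity
    rw [hdup, ← div_le_iff₀ h2, div_eq_mul_inv]
    exact le_mul_of_one_le_right (by positivity) hπ
  rw [gammaRatio, div_le_iff₀ (by positivity), ← hx]
  calc Gamma (x + 1) ≤ Gamma ((x + 1) / 2) * Gamma (x / 2 + 1) * 2 ^ x := hGx
    _ ≤ (4 * i !) * Gamma (x / 2 + 1) * 4 ^ i := by gcongr
    _ = 4 * 4 ^ i * Gamma (x / 2 + 1) * i ! := by ring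

lemma one_add_gammaRatio_le (hα0 : 0 ≤ α) (hα2 : α ≤ 2) {b : ℝ} (hb : 0 ≤ b) (i : ℕ) :
    1 + gammaRatio α i ≤ 10 * 4 ^ i * Gamma ((α * i + b) / 2 + 1) := by
  have hG := one_half_le_Gamma (show 0 < (α * i + b) / 2 + 1 by positivity)
  have hmono := Gamma_le_two_mul_Gamma (x := α * i / 2 + 1) (y := (α * i + b) / 2 + 1)
    (by linarith [show 0 ≤ α * i / 2 by positivity]) (by linarith)
  have h4 : (1 : ℝ) ≤ 4 ^ i := one_le_pow₀ (by norm_num)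
  nlinarith [gammaRatio_le hα0 hα2 i]

end gammaRatio

lemma sum_range_pow_mul_pow_succ_le {D w : ℝ} (hw : 0 ≤ w) (hwD : 2 * w ≤ D) (i : ℕ) :
    ∑ l ∈ Finset.range (i + 1), D ^ (i - l) * w ^ (l + 1) ≤ 2 * w * D ^ i := by
  have hD : 0 ≤ D := by linarith
  calc ∑ l ∈ Finset.range (i + 1), D ^ (i - l) * w ^ (l + 1)
      ≤ ∑ l ∈ Finset.range (i + 1), w * D ^ i * (1 / 2) ^ l := by
        refine Finset.sum_le_sum fun l hl => ?_
        have hli : i - l + l = i := Nat.sub_add_cancel (Nat.lt_succ_iff.1 (Finset.mem_range.1 hl))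
        calc D ^ (i - l) * w ^ (l + 1) = w * (D ^ (i - l) * w ^ l) := by ring
          _ ≤ w * (D ^ (i - l) * (D / 2) ^ l) := by gcongr; linarith
          _ = w * D ^ (i - l + l) * (1 / 2) ^ l := by rw [pow_add, div_pow, one_div_pow]; ring
          _ = w * D ^ i * (1 / 2) ^ l := by rw [hli]
    _ = w * D ^ i * ∑ l ∈ Finset.range (i + 1), (1 / 2 : ℝ) ^ l := by rw [Finset.mul_sum]
    _ ≤ w * D ^ i * 2 := by gcongr; exact sum_geometric_two_le _
    _ = 2 * w * D ^ i := by ring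

section deltaCoef

variable {α μ : ℝ}

lemma exists_Gamma_mul_abs_pow_div_factorial_le (hα : 0 < α) (hμ : 0 < μ) (m : ℝ) :
    ∃ K R : ℝ, 0 ≤ K ∧ 0 ≤ R ∧ ∀ j : ℕ,
      Gamma (α * (j + μ)) * |m| ^ j / j ! ≤ K * R ^ j * gammaRatio α j := by
  set n := ⌈α * μ⌉₊
  have hc : 0 < min (α * μ) 1 := lt_min (by positivity) one_pos
  refine ⟨2 * exp (n * n) / min (α * μ) 1, exp (n * α) * |m|, by positivity, by positivity,
    fun j => ?_⟩
  have h := min_one_mul_Gamma_add_le (x := α * j) (c := α * μ) (by positivity) (by positivity)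
  rw [← le_div_iff₀' hc, show α * j + α * μ = α * (j + μ) by ring] at h
  rw [gammaRatio, mul_pow, ← exp_nat_mul]
  calc Gamma (α * (j + μ)) * |m| ^ j / j !
      ≤ 2 * exp (n * (α * j + n)) * Gamma (α * j + 1) / min (α * μ) 1 * |m| ^ j / j ! := by
        gcongr
    _ = 2 * exp (n * n) / min (α * μ) 1 * (exp (j * (n * α)) * |m| ^ j)
          * (Gamma (α * j + 1) / j !) := by
        rw [show (n : ℝ) * (α * j + n) = n * n + j * (n * α) by ring, exp_add]
        ring

lemma abs_deltaCoef_succ_le (hα : 0 < α) (hμ : 0 < μ) (rh : ℝ) (L i : ℕ) :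
    |deltaCoef α μ rh L (i + 1)| ≤ (L + 1) / Gamma (α * μ) *
      ∑ l ∈ Finset.range (i + 1), |deltaCoef α μ rh L (i - l)| *
        (Gamma (α * ((l + 1 : ℕ) + μ)) * |μ * rh ^ (-α)| ^ (l + 1) / (l + 1) !) := by
  have hg := Gamma_pos_of_pos (show 0 < α * μ by positivity)
  have hterm : ∀ l ∈ Finset.range (i + 1),
      |deltaCoef α μ rh L (i - l) *
        ((((l : ℝ) + 1) * L + ((l : ℝ) + 1) - ((i : ℝ) + 1)) * Gamma (α * (((l : ℝ) + 1) + μ)) *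
          (-μ * rh ^ (-α)) ^ (l + 1) / (l + 1) !)|
      ≤ ((i + 1) * (L + 1)) * (|deltaCoef α μ rh L (i - l)| *
        (Gamma (α * ((l + 1 : ℕ) + μ)) * |μ * rh ^ (-α)| ^ (l + 1) / (l + 1) !)) := by
    intro l hl
    have hli : (l : ℝ) ≤ i := by exact_mod_cast Nat.lt_succ_iff.1 (Finset.mem_range.1 hl)
    have hcoef : |((l : ℝ) + 1) * L + ((l : ℝ) + 1) - ((i : ℝ) + 1)| ≤ (i + 1) * (L + 1) := by
      have hL := Nat.cast_nonneg (α := ℝ) L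
      rw [abs_le]; constructor <;> nlinarith
    have hG := Gamma_pos_of_pos (show 0 < α * (((l : ℝ) + 1) + μ) by positivity)
    rw [abs_mul, abs_div, abs_mul, abs_mul, abs_of_pos hG, abs_pow, neg_mul, abs_neg,
      Nat.abs_cast, Nat.cast_add_one]
    calc |deltaCoef α μ rh L (i - l)| * (|((l : ℝ) + 1) * L + ((l : ℝ) + 1) - ((i : ℝ) + 1)| *
          Gamma (α * ((l + 1) + μ)) * |μ * rh ^ (-α)| ^ (l + 1) / (l + 1) !)
        ≤ |deltaCoef α μ rh L (i - l)| * (((i + 1) * (L + 1)) *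
          Gamma (α * ((l + 1) + μ)) * |μ * rh ^ (-α)| ^ (l + 1) / (l + 1) !) := by gcongr
      _ = _ := by ring
  rw [deltaCoef, abs_mul, abs_of_pos (by positivity)]
  calc 1 / ((i + 1) * Gamma (α * μ)) * |∑ l ∈ Finset.range (i + 1), _|
      ≤ 1 / ((i + 1) * Gamma (α * μ)) * ∑ l ∈ Finset.range (i + 1), ((i + 1) * (L + 1)) *
          (|deltaCoef α μ rh L (i - l)| *
            (Gamma (α * ((l + 1 : ℕ) + μ)) * |μ * rh ^ (-α)| ^ (l + 1) / (l + 1) !)) := by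
        gcongr
        exact (Finset.abs_sum_le_sum_abs _ _).trans (Finset.sum_le_sum hterm)
    _ = _ := by
        rw [← Finset.mul_sum]
        field_simp

lemma exists_abs_deltaCoef_le (hα0 : 0 < α) (hα2 : α ≤ 2) (hμ : 0 < μ) (rh : ℝ) (L : ℕ) :
    ∃ A D : ℝ, 0 ≤ A ∧ 0 ≤ D ∧
      ∀ i, |deltaCoef α μ rh L i| ≤ A * D ^ i * (1 + gammaRatio α i) := by
  obtain ⟨K, R, hK, hR, hKR⟩ := exists_Gamma_mul_abs_pow_div_factorial_le hα0 hμ (μ * rh ^ (-α))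
  set g := Gamma (α * μ)
  have hg : 0 < g := Gamma_pos_of_pos (by positivity)
  set C := 12 * K * R * (L + 1) / g
  have hC : 0 ≤ C := by positivity
  -- `2 * R ≤ D` keeps the convolution sum geometric, `C ≤ D` closes the induction step
  set D := 2 * R + C
  have hh : ∀ j, 0 ≤ 1 + gammaRatio α j := fun j => by linarith [gammaRatio_pos hα0.le j]
  refine ⟨g ^ L, D, by positivity, by positivity, fun i => ?_⟩
  induction i using Nat.strong_induction_on with
  | _ i ih =>
  cases i with
  | zero =>
    rw [deltaCoef, abs_of_pos (by positivity), pow_zero, mul_one]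
    exact le_mul_of_one_le_right (by positivity) (by linarith [gammaRatio_pos hα0.le 0])
  | succ i =>
    have hterm : ∀ l ∈ Finset.range (i + 1), |deltaCoef α μ rh L (i - l)| *
        (Gamma (α * ((l + 1 : ℕ) + μ)) * |μ * rh ^ (-α)| ^ (l + 1) / (l + 1) !)
        ≤ 6 * K * g ^ L * (1 + gammaRatio α (i + 1)) * (D ^ (i - l) * R ^ (l + 1)) := by
      intro l hl
      have hsum := one_add_gammaRatio_mul_le hα0.le hα2 (i - l) (l + 1)
      rw [show i - l + (l + 1) = i + 1 by have := Finset.mem_range.1 hl; omega] at hsum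
      calc |deltaCoef α μ rh L (i - l)| *
            (Gamma (α * ((l + 1 : ℕ) + μ)) * |μ * rh ^ (-α)| ^ (l + 1) / (l + 1) !)
          ≤ (g ^ L * D ^ (i - l) * (1 + gammaRatio α (i - l))) *
            (K * R ^ (l + 1) * gammaRatio α (l + 1)) :=
            mul_le_mul (ih _ (by omega)) (hKR (l + 1))
              (div_nonneg (mul_nonneg (Gamma_pos_of_pos (by positivity)).le (by positivity))
                (by positivity))
              (mul_nonneg (by positivity) (hh _))
        _ = K * g ^ L * ((1 + gammaRatio α (i - l)) * gammaRatio α (l + 1)) *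
            (D ^ (i - l) * R ^ (l + 1)) := by ring
        _ ≤ K * g ^ L * (6 * (1 + gammaRatio α (i + 1))) * (D ^ (i - l) * R ^ (l + 1)) := by
            gcongr
        _ = _ := by ring
    calc |deltaCoef α μ rh L (i + 1)|
        ≤ (L + 1) / g * ∑ l ∈ Finset.range (i + 1), |deltaCoef α μ rh L (i - l)| *
            (Gamma (α * ((l + 1 : ℕ) + μ)) * |μ * rh ^ (-α)| ^ (l + 1) / (l + 1) !) :=
          abs_deltaCoef_succ_le hα0 hμ rh L i
      _ ≤ (L + 1) / g * ∑ l ∈ Finset.range (i + 1),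
            6 * K * g ^ L * (1 + gammaRatio α (i + 1)) * (D ^ (i - l) * R ^ (l + 1)) :=
          mul_le_mul_of_nonneg_left (Finset.sum_le_sum hterm) (by positivity)
      _ ≤ (L + 1) / g * (6 * K * g ^ L * (1 + gammaRatio α (i + 1)) * (2 * R * D ^ i)) := by
          rw [← Finset.mul_sum]
          have := hh (i + 1)
          gcongr
          exact sum_range_pow_mul_pow_succ_le hR (le_add_of_nonneg_right hC) i
      _ = g ^ L * D ^ i * C * (1 + gammaRatio α (i + 1)) := by
          simp only [C]; field_simp; ring
      _ ≤ g ^ L * D ^ (i + 1) * (1 + gammaRatio α (i + 1)) := by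
          rw [pow_succ, ← mul_assoc]
          exact mul_le_mul_of_nonneg_right
            (mul_le_mul_of_nonneg_left (le_add_of_nonneg_left (by positivity)) (by positivity))
            (hh _)

lemma exists_abs_deltaCoef_mul_rpow_div_Gamma_le (hα0 : 0 < α) (hα2 : α ≤ 2) (hμ : 0 < μ)
    (rh : ℝ) (L : ℕ) {y Q : ℝ} (hy : 0 ≤ y) (hQ : 0 < Q) :
    ∃ B E : ℝ, ∀ i : ℕ, |deltaCoef α μ rh L i * Q ^ (-(α * i + y) / 2) /
      Gamma ((α * i + y) / 2 + 1)| ≤ B * E ^ i := by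
  obtain ⟨A, D, hA, hD, hδ⟩ := exists_abs_deltaCoef_le hα0 hα2 hμ rh L
  refine ⟨10 * A * Q ^ (-(y / 2)), 4 * D * Q ^ (-(α / 2)), fun i => ?_⟩
  have hG := Gamma_pos_of_pos (show 0 < (α * i + y) / 2 + 1 by positivity)
  have hQi : Q ^ (-(α * i + y) / 2) = Q ^ (-(y / 2)) * (Q ^ (-(α / 2))) ^ i := by
    rw [← rpow_natCast, ← rpow_mul hQ.le, ← rpow_add hQ]
    ring_nf
  rw [abs_div, abs_mul, abs_of_pos (rpow_pos_of_pos hQ _), abs_of_pos hG, div_le_iff₀ hG]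
  calc |deltaCoef α μ rh L i| * Q ^ (-(α * i + y) / 2)
      ≤ A * D ^ i * (10 * 4 ^ i * Gamma ((α * i + y) / 2 + 1)) * Q ^ (-(α * i + y) / 2) := by
        gcongr
        exact (hδ i).trans (by gcongr; exact one_add_gammaRatio_le hα0.le hα2 hy i)
    _ = _ := by rw [hQi]; ring

end deltaCoef

open Filter Topology

lemma tendsto_tsum_mul_pow {ι : Type*} {l : Filter ι} {c : ℕ → ℝ} {B E : ℝ}
    (hc : ∀ i, |c i| ≤ B * E ^ i) {f : ι → ℝ} (hf : Tendsto f l (𝓝 0)) :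
    Tendsto (fun x => ∑' i, c i * f x ^ i) l (𝓝 (c 0)) := by
  have hB : 0 ≤ B := by simpa using (abs_nonneg _).trans (hc 0)
  set r := 1 / (2 * (|E| + 1))
  have hr : 0 < r := by positivity
  have hEr : |E| * r < 1 := by
    rw [mul_one_div, div_lt_one (by positivity)]
    linarith [abs_nonneg E]
  have hsum : ∑' i, c i * (0 : ℝ) ^ i = c 0 := by
    rw [tsum_eq_single 0 fun i hi => by simp [hi]]
    simp
  rw [← hsum]
  refine tendsto_tsum_of_dominated_convergence (bound := fun i => B * (|E| * r) ^ i)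
    ((summable_geometric_of_lt_one (by positivity) hEr).mul_left B)
    (fun i => tendsto_const_nhds.mul (hf.pow i)) ?_
  filter_upwards [hf.eventually (Metric.closedBall_mem_nhds 0 hr)] with x hx i
  rw [dist_zero_right] at hx
  calc ‖c i * f x ^ i‖ = |c i| * ‖f x‖ ^ i := by rw [norm_mul, norm_pow, Real.norm_eq_abs]
    _ ≤ (B * |E| ^ i) * r ^ i := by
        gcongr
        exact (hc i).trans (mul_le_mul_of_nonneg_left ((le_abs_self _).trans (abs_pow E i).le) hB)
    _ = B * (|E| * r) ^ i := by ring

lemma rpow_half_mul_rpow_neg_eq {Q s : ℝ} (hQ : 0 < Q) (hs : 0 < s) (x y : ℝ) (i : ℕ) :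
    s ^ (y / 2) * (Q * s) ^ (-(x * i + y) / 2) = Q ^ (-(x * i + y) / 2) * (s ^ (-(x / 2))) ^ i := by
  rw [mul_rpow hQ.le hs.le, mul_left_comm, ← rpow_add hs, ← rpow_natCast, ← rpow_mul hs.le]
  ring_nf

theorem aser_egc_asymptotic_general
    (α μ rh : ℝ) (hμ : 0 < μ) (hα0 : 0 < α) (hα2 : α < 2)
    (L : ℕ) (hL : 1 ≤ L) (G : ℝ) (hG : 0 < G)
    (Pe : ℝ → ℝ)
    (hPe : ∀ s : ℝ, 0 < s → Pe s =
      (1 / 2) * (α * μ ^ μ / (Real.Gamma μ * rh ^ (α * μ))) ^ L *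
        ∑' i : ℕ,
          deltaCoef α μ rh L i *
            (4 * G * s / (L : ℝ)) ^ (-(α * (i : ℝ) + α * μ * (L : ℝ)) / 2) /
            Real.Gamma ((α * (i : ℝ) + α * μ * (L : ℝ)) / 2 + 1)) :
    Tendsto (fun s : ℝ => s ^ (α * μ * (L : ℝ) / 2) * Pe s) atTop
      (nhds (((L : ℝ) / (4 * G)) ^ (α * μ * (L : ℝ) / 2) *
        (α * μ ^ μ * Real.Gamma (α * μ) / (Real.Gamma μ * rh ^ (α * μ))) ^ L /
        (2 * Real.Gamma (α * μ * (L : ℝ) / 2 + 1)))) := by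
  have hL0 : (0 : ℝ) < L := by exact_mod_cast hL
  have hQ : 0 < 4 * G / L := by positivity
  obtain ⟨B, E, hc⟩ := exists_abs_deltaCoef_mul_rpow_div_Gamma_le hα0 hα2.le hμ rh L
    (y := α * μ * L) (by positivity) hQ
  have hz := tendsto_rpow_neg_atTop (show 0 < α / 2 by positivity)
  have hlim := (tendsto_tsum_mul_pow hc hz).const_mul
    ((1 / 2) * (α * μ ^ μ / (Gamma μ * rh ^ (α * μ))) ^ L)
  convert hlim.congr' ((eventually_gt_atTop 0).mono fun s hs => ?_) using 2
  · rw [Nat.cast_zero, mul_zero, zero_add, deltaCoef,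
      show -(α * μ * L) / 2 = -(α * μ * L / 2) by ring,
      rpow_neg hQ.le, ← inv_rpow hQ.le, inv_div, mul_div_right_comm _ (Gamma (α * μ)), mul_pow]
    ring
  · rw [hPe s hs, mul_left_comm, ← tsum_mul_left (a := s ^ _)]
    congr 1
    refine tsum_congr fun i => ?_
    rw [show 4 * G * s / L = 4 * G / L * s by ring]
    linear_combination (-(deltaCoef α μ rh L i / Gamma ((α * i + α * μ * L) / 2 + 1))) *
      rpow_half_mul_rpow_neg_eq hQ hs α (α * μ * L) i

/-- High-SNR asymptotics of the exact EGC average symbol error rate: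
diversity order αμL/2 and the corresponding coding-gain constant. -/
theorem aser_egc_asymptotic
    (α μ rh : ℝ) (hμ : 0 < μ) (hrh : 0 < rh) (hα0 : 0 < α) (hα2 : α < 2)
    (L : ℕ) (hL : 1 ≤ L) (G : ℝ) (hG : 0 < G)
    (Pe : ℝ → ℝ)
    (hPe : ∀ s : ℝ, 0 < s → Pe s =
      (1 / 2) * (α * μ ^ μ / (Real.Gamma μ * rh ^ (α * μ))) ^ L *
        ∑' i : ℕ,
          deltaCoef α μ rh L i *
            (4 * G * s / (L : ℝ)) ^ (-(α * (i : ℝ) + α * μ * (L : ℝ)) / 2) /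
            Real.Gamma ((α * (i : ℝ) + α * μ * (L : ℝ)) / 2 + 1)) :
    Tendsto (fun s : ℝ => s ^ (α * μ * (L : ℝ) / 2) * Pe s) atTop
      (nhds (((L : ℝ) / (4 * G)) ^ (α * μ * (L : ℝ) / 2) *
        (α * μ ^ μ * Real.Gamma (α * μ) / (Real.Gamma μ * rh ^ (α * μ))) ^ L /
        (2 * Real.Gamma (α * μ * (L : ℝ) / 2 + 1)))) :=
  aser_egc_asymptotic_general α μ rh hμ hα0 hα2 L hL G hG Pe hPe
end
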